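/- Let λ, R > 0 and suppose s ∈ [R + π/(4λ), R + π/(2λ)] satisfies τ(s) ≥ (1 - 4λ(R + π/(2λ)))s² + 4λs³, where τ(s) = s²(1 - 1/tan²(λ(s-R))). Then s ≤ R + (1/λ)(π/2 - (1/4)(1 - τ(s)/(R + π/(4λ))²)). -/

import Mathlib

/-!
With `θ = λ(s - R) ∈ [π/4, π/2]` we have `0 ≤ τ(s)/s² = 1 - cot² θ`. Dividing the hypothesis by `s²`
gives `1 + 4λ(s - R) - 2π ≤ τ(s)/s²`, and `τ(s)/s² ≤ τ(s)/(R + π/(4λ))²` because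
`s ≥ R + π/(4λ) > 0`; solving the resulting linear inequality for `s` gives the bound.
-/

open Real

lemma mul_sub_mem_Icc_of_mem_Icc {lam R s a b : ℝ} (hlam : 0 < lam)
    (hs : s ∈ Set.Icc (R + a / lam) (R + b / lam)) : lam * (s - R) ∈ Set.Icc a b := by
  obtain ⟨hsa, hsb⟩ := hs
  exact ⟨(div_le_iff₀' hlam).1 (by linarith), (le_div_iff₀' hlam).1 (by linarith)⟩

lemma cos_le_sin_of_mem_Icc {θ : ℝ} (hθ : θ ∈ Set.Icc (π / 4) (π / 2)) : cos θ ≤ sin θ := by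
  rw [← sin_pi_div_two_sub]
  exact sin_le_sin_of_le_of_le_pi_div_two (by linarith [hθ.2, pi_pos]) hθ.2 (by linarith [hθ.1])

lemma one_div_tan_sq_le_one_of_mem_Icc {θ : ℝ} (hθ : θ ∈ Set.Icc (π / 4) (π / 2)) :
    1 / tan θ ^ 2 ≤ 1 := by
  have hcos : 0 ≤ cos θ := cos_nonneg_of_mem_Icc ⟨by linarith [hθ.1, pi_pos], hθ.2⟩
  have hsin : 0 < sin θ := sin_pos_of_pos_of_lt_pi (by linarith [hθ.1, pi_pos])
    (by linarith [hθ.2, pi_pos])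
  rw [tan_eq_sin_div_cos, div_pow, one_div_div, div_le_one (by positivity)]
  exact pow_le_pow_left₀ hcos (cos_le_sin_of_mem_Icc hθ) 2

lemma linear_le_of_cubic_le_sq_mul {lam R s p T : ℝ} (hlam : 0 < lam) (hs : 0 < s)
    (h : (1 - 4 * lam * (R + p / (2 * lam))) * s ^ 2 + 4 * lam * s ^ 3 ≤ s ^ 2 * T) :
    1 + 4 * lam * (s - R) - 2 * p ≤ T := by
  have hfactor : (1 - 4 * lam * (R + p / (2 * lam))) * s ^ 2 + 4 * lam * s ^ 3
      = s ^ 2 * (1 + 4 * lam * (s - R) - 2 * p) := by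
    field_simp; ring
  rw [hfactor] at h
  exact le_of_mul_le_mul_left h (by positivity)

lemma le_add_one_div_mul_of_linear_le {lam R s p t : ℝ} (hlam : 0 < lam) (h : 1 + 4 * lam * (s - R) - 2 * p ≤ t) :
    s ≤ R + (1 / lam) * (p / 2 - (1 / 4) * (1 - t)) := by
  rw [← sub_nonneg]
  have hrw : R + (1 / lam) * (p / 2 - (1 / 4) * (1 - t)) - s
      = (t - (1 + 4 * lam * (s - R) - 2 * p)) / (4 * lam) := by
    field_simp; ring
  rw [hrw]
  exact div_nonneg (by linarith) (by positivity)

/-- If `s ∈ [R + π/(4λ), R + π/(2λ)]` satisfies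
`τ(s) ≥ (1 - 4λ(R + π/(2λ)))s² + 4λs³` with `τ(s) = s²(1 - 1/tan²(λ(s-R)))`, then
`s ≤ R + (1/λ)(π/2 - (1/4)(1 - τ(s)/(R + π/(4λ))²))`. -/
theorem s_upper_bound (lam R s : ℝ) (hlam : 0 < lam) (hR : 0 < R)
    (hs : s ∈ Set.Icc (R + Real.pi / (4 * lam)) (R + Real.pi / (2 * lam)))
    (htau : (1 - 4 * lam * (R + Real.pi / (2 * lam))) * s ^ 2 + 4 * lam * s ^ 3 ≤
      s ^ 2 * (1 - 1 / Real.tan (lam * (s - R)) ^ 2)) :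
    s ≤ R + (1 / lam) * (Real.pi / 2 -
      (1 / 4) * (1 - s ^ 2 * (1 - 1 / Real.tan (lam * (s - R)) ^ 2) /
        (R + Real.pi / (4 * lam)) ^ 2)) := by
  have hθ : lam * (s - R) ∈ Set.Icc (π / 4) (π / 2) :=
    mul_sub_mem_Icc_of_mem_Icc hlam (by rwa [div_div, div_div])
  set A := R + π / (4 * lam)
  set T := 1 - 1 / tan (lam * (s - R)) ^ 2
  have hA : 0 < A := by positivity
  have hAs : A ≤ s := hs.1
  have hT : 0 ≤ T := sub_nonneg.2 (one_div_tan_sq_le_one_of_mem_Icc hθ)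
  have hscale : T ≤ s ^ 2 * T / A ^ 2 := by
    rw [le_div_iff₀ (by positivity), mul_comm]
    exact mul_le_mul_of_nonneg_right (pow_le_pow_left₀ hA.le hAs 2) hT
  exact le_add_one_div_mul_of_linear_le hlam ((linear_le_of_cubic_le_sq_mul hlam (hA.trans_le hAs) htau).trans hscale)
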